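/- Let G be a connected graph and Z a finite generous set of vertices, meaning at least two components of G − Z have neighbourhood exactly Z. Let X be a principal vertex set of G (X meets at most one component of G − W for every finite vertex set W) that does not contain Z as a subset. Then there is exactly one component of G − X that Z meets. -/
import Mathlib


open Set

variable {V : Type*}

/-- A separation of the graph G: the two sides cover V and no edge jumps the separator. -/
def IsGraphSep (G : SimpleGraph V) (p : Set V × Set V) : Prop :=
  p.1 ∪ p.2 = Set.univ ∧ ∀ a ∈ p.1 \ p.2, ∀ b ∈ p.2 \ p.1, ¬ G.Adj a b

/-- The component of G − X containing some vertex v ∉ X, described via walks avoiding X. -/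
def ComponentOf (G : SimpleGraph V) (X C : Set V) : Prop :=
  ∃ v, v ∉ X ∧ C = {w | ∃ p : G.Walk v w, ∀ x ∈ p.support, x ∉ X}

/-- The neighbourhood of a vertex set C: vertices outside C adjacent to C. -/
def nbhd (G : SimpleGraph V) (C : Set V) : Set V :=
  {x | x ∉ C ∧ ∃ c ∈ C, G.Adj x c}

/-- X is a principal vertex set: X meets at most one component of G − W for every
finite vertex set W. -/
def Principal (G : SimpleGraph V) (X : Set V) : Prop :=
  ∀ W : Set V, W.Finite → ∀ C D : Set V, ComponentOf G W C → ComponentOf G W D →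
    (X ∩ C).Nonempty → (X ∩ D).Nonempty → C = D

lemma mem_comp_not_mem {G : SimpleGraph V} {X C : Set V} (h : ComponentOf G X C)
    {w : V} (hw : w ∈ C) : w ∉ X := by
  obtain ⟨v, hv, rfl⟩ := h
  obtain ⟨p, hp⟩ := hw
  exact hp w p.end_mem_support

lemma comp_eq_from {G : SimpleGraph V} {X C : Set V} (h : ComponentOf G X C)
    {z : V} (hz : z ∈ C) :
    C = {w | ∃ p : G.Walk z w, ∀ x ∈ p.support, x ∉ X} := by
  obtain ⟨v, hv, rfl⟩ := h
  obtain ⟨q, hq⟩ := hz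
  ext w
  constructor
  · rintro ⟨p, hp⟩
    refine ⟨q.reverse.append p, fun x hx => ?_⟩
    rcases (SimpleGraph.Walk.mem_support_append_iff _ _).1 hx with hx | hx
    · exact hq x (by simpa [SimpleGraph.Walk.support_reverse] using hx)
    · exact hp x hx
  · rintro ⟨p, hp⟩
    refine ⟨q.append p, fun x hx => ?_⟩
    rcases (SimpleGraph.Walk.mem_support_append_iff _ _).1 hx with hx | hx
    · exact hq x hx
    · exact hp x hx

lemma comp_unique {G : SimpleGraph V} {X C D : Set V} (hC : ComponentOf G X C)
    (hD : ComponentOf G X D) {z : V} (hzC : z ∈ C) (hzD : z ∈ D) : C = D := by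
  rw [comp_eq_from hC hzC, comp_eq_from hD hzD]

lemma walk_between {G : SimpleGraph V} {Z X C₁ : Set V}
    (hC : ComponentOf G Z C₁) (hnb : nbhd G C₁ = Z) (hdisj : ∀ c ∈ C₁, c ∉ X)
    {z₁ z₂ : V} (hz₁ : z₁ ∈ Z) (hz₂ : z₂ ∈ Z) (hx₁ : z₁ ∉ X) (hx₂ : z₂ ∉ X) :
    ∃ p : G.Walk z₁ z₂, ∀ x ∈ p.support, x ∉ X := by
  rw [← hnb] at hz₁ hz₂
  obtain ⟨-, c₁, hc₁, hadj₁⟩ := hz₁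
  obtain ⟨-, c₂, hc₂, hadj₂⟩ := hz₂
  obtain ⟨v, hv, hCeq⟩ := hC
  have hsupp : ∀ ⦃w : V⦄, w ∈ C₁ → ∃ p : G.Walk v w, ∀ x ∈ p.support, x ∈ C₁ := by
    intro w hw
    classical
    rw [hCeq] at hw
    obtain ⟨p, hp⟩ := hw
    refine ⟨p, fun x hx => ?_⟩
    rw [hCeq]
    exact ⟨p.takeUntil x hx, fun y hy => hp y (p.support_takeUntil_subset hx hy)⟩
  obtain ⟨p₁, hp₁⟩ := hsupp hc₁
  obtain ⟨p₂, hp₂⟩ := hsupp hc₂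
  refine ⟨SimpleGraph.Walk.cons hadj₁
    ((p₁.reverse.append p₂).append (SimpleGraph.Walk.cons hadj₂.symm SimpleGraph.Walk.nil)),
    fun x hx => ?_⟩
  simp only [SimpleGraph.Walk.support_cons, List.mem_cons,
    SimpleGraph.Walk.mem_support_append_iff, SimpleGraph.Walk.support_reverse,
    List.mem_reverse, SimpleGraph.Walk.support_nil] at hx
  rcases hx with rfl | (hx | hx) | hx
  · exact hx₁
  · exact hdisj x (hp₁ x hx)
  · exact hdisj x (hp₂ x hx)
  · simp at hx
    rcases hx with rfl | rfl
    · exact hdisj x (hp₂ _ p₂.end_mem_support)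
    · exact hx₂

lemma meets_Z_eq {G : SimpleGraph V} {Z X C D : Set V}
    (hgen : ∃ C₁ C₂ : Set V, C₁ ≠ C₂ ∧
      ComponentOf G Z C₁ ∧ nbhd G C₁ = Z ∧ ComponentOf G Z C₂ ∧ nbhd G C₂ = Z)
    (hZfin : Z.Finite) (hX : Principal G X)
    (hC : ComponentOf G X C) (hD : ComponentOf G X D)
    (hCZ : (Z ∩ C).Nonempty) (hDZ : (Z ∩ D).Nonempty) : C = D := by
  obtain ⟨C₁, C₂, hne, h1, hn1, h2, hn2⟩ := hgen
  obtain ⟨z₁, hz₁Z, hz₁C⟩ := hCZ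
  obtain ⟨z₂, hz₂Z, hz₂D⟩ := hDZ
  have hx₁ := mem_comp_not_mem hC hz₁C
  have hx₂ := mem_comp_not_mem hD hz₂D
  obtain ⟨Cg, hCg, hnbg, hdisj⟩ :
      ∃ Cg, ComponentOf G Z Cg ∧ nbhd G Cg = Z ∧ ∀ c ∈ Cg, c ∉ X := by
    by_cases h : (X ∩ C₁).Nonempty
    · refine ⟨C₂, h2, hn2, fun c hc hcX => ?_⟩
      exact hne (hX Z hZfin C₁ C₂ h1 h2 h ⟨c, hcX, hc⟩)
    · exact ⟨C₁, h1, hn1, fun c hc hcX => h ⟨c, hcX, hc⟩⟩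
  obtain ⟨p, hp⟩ := walk_between hCg hnbg hdisj hz₁Z hz₂Z hx₁ hx₂
  have hz₂C : z₂ ∈ C := by
    rw [comp_eq_from hC hz₁C]
    exact ⟨p, hp⟩
  exact comp_unique hC hD hz₂C hz₂D

/-- If G is connected, Z is a finite generous vertex set (at least two
components of G − Z have neighbourhood exactly Z), and X is a principal vertex set not
containing Z, then exactly one component of G − X meets Z. -/
theorem stmt_16 {V : Type*} (G : SimpleGraph V) (hconn : G.Connected)
    (Z : Set V) (hZfin : Z.Finite)
    (hgen : ∃ C₁ C₂ : Set V, C₁ ≠ C₂ ∧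
      ComponentOf G Z C₁ ∧ nbhd G C₁ = Z ∧ ComponentOf G Z C₂ ∧ nbhd G C₂ = Z)
    (X : Set V) (hX : Principal G X) (hZX : ¬ Z ⊆ X) :
    ∃! C : Set V, ComponentOf G X C ∧ (Z ∩ C).Nonempty := by
  obtain ⟨z, hzZ, hzX⟩ := not_subset.1 hZX
  have hcomp : ComponentOf G X {w | ∃ p : G.Walk z w, ∀ x ∈ p.support, x ∉ X} :=
    ⟨z, hzX, rfl⟩
  refine ⟨_, ⟨hcomp, z, hzZ, SimpleGraph.Walk.nil, by simp [hzX]⟩, fun D hD => ?_⟩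
  exact meets_Z_eq hgen hZfin hX hD.1 hcomp hD.2
    ⟨z, hzZ, SimpleGraph.Walk.nil, by simp [hzX]⟩
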